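/- arXiv:2210.17373 — 2 statements merged into one kernel-verified Lean document; each statement's English description precedes it below -/
import Mathlib

section
/- Let A = [a_{ij}]_{i∈I, j∈J} be a nonnegative matrix with |I|, |J| ≥ 2 having Γ-shaped support with dominant corner (i1, j1), and let β = max_{k∈I, k≠i1} a_{k j1}. Define the nonnegative matrices A1 and A2 on I × J by: A1_{i1 j1} = a_{i1 j1} − β, A1_{i1 l} = a_{i1 l} for l ≠ j1, A1_{kl} = 0 for k ≠ i1; and A2_{k j1} = a_{k j1} for k ≠ i1, A2_{i1 j1} = β, A2_{kl} = 0 for l ≠ j1. Then w_A(S) = w_{A1}(S) + w_{A2}(S) for every coalition S ⊆ I ∪ J; that is, the assignment game w_A is the sum of an assignment game whose positive entries lie in a single row and one whose positive entries lie in a single column. -/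
open Finset

/-- A population monotonic allocation scheme (PMAS) for the TU game `w` on the
finite player set `α`: subgame efficiency on every nonempty coalition, and
individual payoff monotonicity along coalition inclusion. -/
def IsPMAS {α : Type*} [Fintype α] (w : Finset α → ℝ) (x : Finset α → α → ℝ) : Prop :=
  (∀ S : Finset α, S.Nonempty → ∑ i ∈ S, x S i = w S) ∧
  (∀ S T : Finset α, S ⊆ T → ∀ i ∈ S, x S i ≤ x T i)

/-- `μ` is a matching inside coalition `S`: every pair uses players of `S`,
and each player appears in at most one pair. -/
def IsMatching {I J : Type*} (S : Finset (I ⊕ J)) (μ : Finset (I × J)) : Prop :=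
  (∀ p ∈ μ, Sum.inl p.1 ∈ S ∧ Sum.inr p.2 ∈ S) ∧
  (∀ p ∈ μ, ∀ q ∈ μ, p.1 = q.1 → p = q) ∧
  (∀ p ∈ μ, ∀ q ∈ μ, p.2 = q.2 → p = q)

/-- The assignment game induced by the matrix `A`. -/
noncomputable def assignGame {I J : Type*} [Fintype I] [Fintype J]
    (A : I → J → ℝ) (S : Finset (I ⊕ J)) : ℝ :=
  sSup ((fun μ : Finset (I × J) => ∑ p ∈ μ, A p.1 p.2) '' {μ | IsMatching S μ})

/-- `x` is a core allocation of the game `w`. -/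
def InCore {α : Type*} [Fintype α] (w : Finset α → ℝ) (x : α → ℝ) : Prop :=
  (∑ i, x i) = w Finset.univ ∧ ∀ S : Finset α, w S ≤ ∑ i ∈ S, x i

/-- `x` is PMAS-extendable in the game `w`. -/
def PMASExtendable {α : Type*} [Fintype α] (w : Finset α → ℝ) (x : α → ℝ) : Prop :=
  ∃ y, IsPMAS w y ∧ ∀ i, y Finset.univ i = x i

/-- The upper (utopia) vector. -/
noncomputable def upperVec {α : Type*} [Fintype α] [DecidableEq α]
    (v : Finset α → ℝ) (i : α) : ℝ :=
  v Finset.univ - v (Finset.univ.erase i)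

/-- The lower (minimal right) vector. -/
noncomputable def lowerVec {α : Type*} [Fintype α] [DecidableEq α]
    (v : Finset α → ℝ) (i : α) : ℝ :=
  sSup {t | ∃ S : Finset α, i ∈ S ∧ t = v S - ∑ j ∈ S.erase i, upperVec v j}

/-- `τ` is a tau-value of the game `v`. -/
def IsTauValue {α : Type*} [Fintype α] [DecidableEq α] (v : Finset α → ℝ) (τ : α → ℝ) : Prop :=
  ∃ κ : ℝ, 0 ≤ κ ∧ κ ≤ 1 ∧ (∀ i, τ i = κ * upperVec v i + (1 - κ) * lowerVec v i) ∧
    ∑ i, τ i = v Finset.univ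

open scoped Classical in
/-- The nondecreasingly ordered list of satisfactions of the nonempty proper
coalitions at allocation `x`. -/
noncomputable def satList {α : Type*} [Fintype α] (v : Finset α → ℝ) (x : α → ℝ) : List ℝ :=
  ((Finset.univ.filter (fun S : Finset α => S.Nonempty ∧ S ≠ Finset.univ)).val.map
    (fun S => ∑ i ∈ S, x i - v S)).sort (· ≤ ·)

/-- `x` is the nucleolus of `v`: a core allocation lexicographically maximizing
the nondecreasingly ordered satisfaction vector over the core. -/
noncomputable def IsNucleolus {α : Type*} [Fintype α] (v : Finset α → ℝ) (x : α → ℝ) : Prop :=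
  InCore v x ∧ ∀ y, InCore v y →
    satList v y = satList v x ∨ List.Lex (· < ·) (satList v y) (satList v x)

/-- `A` has Γ-shaped support with corner `(i1, j1)`. -/
def GammaShaped {I J : Type*} (A : I → J → ℝ) (i1 : I) (j1 : J) : Prop :=
  (∀ k l, (k = i1 ∨ l = j1) → 0 < A k l) ∧ (∀ k l, k ≠ i1 → l ≠ j1 → A k l = 0)

/-- The corner `(i1, j1)` of `A` is dominant. -/
def DominantCorner {I J : Type*} (A : I → J → ℝ) (i1 : I) (j1 : J) : Prop :=
  ∀ k l, k ≠ i1 → l ≠ j1 → A i1 l + A k j1 ≤ A i1 j1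

set_option linter.unusedSectionVars false in
lemma isMatching_empty' {I J : Type*} (S : Finset (I ⊕ J)) :
    IsMatching S (∅ : Finset (I × J)) := by
  refine ⟨?_, ?_, ?_⟩ <;> simp

lemma isMatching_subset' {I J : Type*} {S : Finset (I ⊕ J)} {μ σ : Finset (I × J)}
    (h : IsMatching S μ) (hs : σ ⊆ μ) : IsMatching S σ :=
  ⟨fun p hp => h.1 p (hs hp), fun p hp q hq => h.2.1 p (hs hp) q (hs hq),
   fun p hp q hq => h.2.2 p (hs hp) q (hs hq)⟩

lemma assignGame_bddAbove' {I J : Type*} [Fintype I] [Fintype J]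
    (A : I → J → ℝ) (hA : ∀ i j, 0 ≤ A i j) (S : Finset (I ⊕ J)) :
    BddAbove ((fun μ : Finset (I × J) => ∑ p ∈ μ, A p.1 p.2) '' {μ | IsMatching S μ}) := by
  refine ⟨∑ p : I × J, A p.1 p.2, ?_⟩
  rintro x ⟨μ, _, rfl⟩
  exact Finset.sum_le_sum_of_subset_of_nonneg (Finset.subset_univ μ)
    (fun p _ _ => hA p.1 p.2)

lemma le_assignGame' {I J : Type*} [Fintype I] [Fintype J]
    (A : I → J → ℝ) (hA : ∀ i j, 0 ≤ A i j) {S : Finset (I ⊕ J)}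
    {μ : Finset (I × J)} (hμ : IsMatching S μ) :
    ∑ p ∈ μ, A p.1 p.2 ≤ assignGame A S :=
  le_csSup (assignGame_bddAbove' A hA S) ⟨μ, hμ, rfl⟩

lemma assignGame_le' {I J : Type*} [Fintype I] [Fintype J]
    (A : I → J → ℝ) {S : Finset (I ⊕ J)} {c : ℝ}
    (h : ∀ μ : Finset (I × J), IsMatching S μ → ∑ p ∈ μ, A p.1 p.2 ≤ c) :
    assignGame A S ≤ c := by
  unfold assignGame
  have hne : ((fun μ : Finset (I × J) => ∑ p ∈ μ, A p.1 p.2) '' {μ | IsMatching S μ}).Nonempty :=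
    ⟨0, ∅, isMatching_empty' S, by simp⟩
  refine csSup_le hne ?_
  rintro x ⟨μ, hμ, rfl⟩
  exact h μ hμ

/-- An assignment game with Γ-shaped support and dominant corner
is the sum of an assignment game whose positive entries lie in a single row
and one whose positive entries lie in a single column. -/
theorem assignGame_gamma_dominant_decomposition {I J : Type*} [Fintype I] [Fintype J]
    [DecidableEq I] [DecidableEq J]
    (h2I : 2 ≤ Fintype.card I) (h2J : 2 ≤ Fintype.card J)
    (A : I → J → ℝ) (hA : ∀ i j, 0 ≤ A i j)
    (i1 : I) (j1 : J) (hG : GammaShaped A i1 j1) (hdom : DominantCorner A i1 j1)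
    (β : ℝ) (hβmem : ∃ k, k ≠ i1 ∧ A k j1 = β) (hβub : ∀ k, k ≠ i1 → A k j1 ≤ β) :
    ∀ S : Finset (I ⊕ J),
      assignGame A S =
        assignGame (fun k l => if k = i1 then (if l = j1 then A i1 j1 - β else A i1 l) else 0) S +
        assignGame (fun k l => if l = j1 then (if k = i1 then β else A k j1) else 0) S := by
  intro S
  obtain ⟨k0, hk0, hk0β⟩ := hβmem
  obtain ⟨l0, hl0⟩ := Fintype.exists_ne_of_one_lt_card (by omega : 1 < Fintype.card J) j1
  have hβ0 : 0 ≤ β := hk0β ▸ hA k0 j1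
  have hβle : β ≤ A i1 j1 := by
    have h1 := hdom k0 l0 hk0 hl0
    have h2 := hG.1 i1 l0 (Or.inl rfl)
    linarith
  set B1 : I → J → ℝ := fun k l => if k = i1 then (if l = j1 then A i1 j1 - β else A i1 l) else 0
    with hB1def
  set B2 : I → J → ℝ := fun k l => if l = j1 then (if k = i1 then β else A k j1) else 0
    with hB2def
  have hB1nn : ∀ k l, 0 ≤ B1 k l := by
    intro k l; rw [hB1def]; dsimp only; split_ifs
    · linarith
    · exact hA i1 l
    · exact le_refl 0
  have hB2nn : ∀ k l, 0 ≤ B2 k l := by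
    intro k l; rw [hB2def]; dsimp only; split_ifs
    · exact hβ0
    · exact hA k j1
    · exact le_refl 0
  have hB1le : ∀ k l, B1 k l ≤ A k l := by
    intro k l; rw [hB1def]; dsimp only; split_ifs with h1 h2
    · subst h1; subst h2; linarith
    · subst h1; exact le_refl _
    · exact hA k l
  have hB2le : ∀ k l, B2 k l ≤ A k l := by
    intro k l; rw [hB2def]; dsimp only; split_ifs with h1 h2
    · subst h2; subst h1; exact hβle
    · subst h1; exact le_refl _
    · exact hA k l
  have hsum : ∀ k l, A k l = B1 k l + B2 k l := by
    intro k l; rw [hB1def, hB2def]; dsimp only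
    by_cases h1 : k = i1 <;> by_cases h2 : l = j1
    · subst h1; subst h2; simp
    · subst h1; simp [h2]
    · subst h2; simp [h1]
    · simp only [if_neg h1, if_neg h2, add_zero]
      exact hG.2 k l h1 h2
  have key : ∀ μ ν : Finset (I × J), IsMatching S μ → IsMatching S ν →
      (∑ p ∈ μ, B1 p.1 p.2) + (∑ p ∈ ν, B2 p.1 p.2) ≤ assignGame A S := by
    intro μ ν hμ hν
    have hsub1 : ∀ σ ⊆ μ, ∑ p ∈ σ, B1 p.1 p.2 ≤ assignGame A S := fun σ hσ =>
      le_trans (Finset.sum_le_sum fun p _ => hB1le p.1 p.2)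
        (le_assignGame' A hA (isMatching_subset' hμ hσ))
    have hsub2 : ∀ σ ⊆ ν, ∑ p ∈ σ, B2 p.1 p.2 ≤ assignGame A S := fun σ hσ =>
      le_trans (Finset.sum_le_sum fun p _ => hB2le p.1 p.2)
        (le_assignGame' A hA (isMatching_subset' hν hσ))
    set f1 : Finset (I × J) := μ.filter (fun p => p.1 = i1) with hf1
    set f2 : Finset (I × J) := ν.filter (fun p => p.2 = j1) with hf2
    have e1 : ∑ p ∈ μ, B1 p.1 p.2 = ∑ p ∈ f1, B1 p.1 p.2 := by
      rw [hf1]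
      exact (Finset.sum_filter_of_ne (fun p _ h => by
        by_contra hne
        exact h (by rw [hB1def]; dsimp only; rw [if_neg hne]))).symm
    have e2 : ∑ p ∈ ν, B2 p.1 p.2 = ∑ p ∈ f2, B2 p.1 p.2 := by
      rw [hf2]
      exact (Finset.sum_filter_of_ne (fun p _ h => by
        by_contra hne
        exact h (by rw [hB2def]; dsimp only; rw [if_neg hne]))).symm
    rcases f1.eq_empty_or_nonempty with h1 | ⟨p, hp⟩
    · rw [e1, h1]
      simp only [Finset.sum_empty, zero_add]
      exact hsub2 ν (le_refl ν)
    · rcases f2.eq_empty_or_nonempty with h2 | ⟨q, hq⟩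
      · rw [e2, h2]
        simp only [Finset.sum_empty, add_zero]
        exact hsub1 μ (le_refl μ)
      · have hpμ : p ∈ μ := (Finset.mem_filter.mp hp).1
        have hp1 : p.1 = i1 := (Finset.mem_filter.mp hp).2
        have hqν : q ∈ ν := (Finset.mem_filter.mp hq).1
        have hq2 : q.2 = j1 := (Finset.mem_filter.mp hq).2
        have hf1s : f1 = {p} := by
          apply Finset.eq_singleton_iff_unique_mem.mpr
          refine ⟨hp, fun r hr => ?_⟩
          have hrμ : r ∈ μ := (Finset.mem_filter.mp hr).1
          have hr1 : r.1 = i1 := (Finset.mem_filter.mp hr).2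
          exact hμ.2.1 r hrμ p hpμ (hr1.trans hp1.symm)
        have hf2s : f2 = {q} := by
          apply Finset.eq_singleton_iff_unique_mem.mpr
          refine ⟨hq, fun r hr => ?_⟩
          have hrν : r ∈ ν := (Finset.mem_filter.mp hr).1
          have hr2 : r.2 = j1 := (Finset.mem_filter.mp hr).2
          exact hν.2.2 r hrν q hqν (hr2.trans hq2.symm)
        rw [e1, e2, hf1s, hf2s, Finset.sum_singleton, Finset.sum_singleton]
        have hi1S : Sum.inl i1 ∈ S := by have := (hμ.1 p hpμ).1; rwa [hp1] at this
        have hj1S : Sum.inr j1 ∈ S := by have := (hν.1 q hqν).2; rwa [hq2] at this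
        by_cases hcase : q.1 = i1 ∨ p.2 = j1
        · have hmatch : IsMatching S ({(i1, j1)} : Finset (I × J)) := by
            refine ⟨?_, ?_, ?_⟩
            · intro r hr
              simp only [Finset.mem_singleton] at hr
              subst hr
              exact ⟨hi1S, hj1S⟩
            · intro r hr s hs _
              simp only [Finset.mem_singleton] at hr hs
              rw [hr, hs]
            · intro r hr s hs _
              simp only [Finset.mem_singleton] at hr hs
              rw [hr, hs]
          have hval : B1 p.1 p.2 + B2 q.1 q.2 ≤ A i1 j1 := by
            rw [hB1def, hB2def]; dsimp only
            rw [hp1, hq2, if_pos rfl, if_pos rfl]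
            by_cases hpj : p.2 = j1 <;> by_cases hqi : q.1 = i1
            · rw [if_pos hpj, if_pos hqi]; linarith
            · rw [if_pos hpj, if_neg hqi]
              have := hβub q.1 hqi; linarith
            · rw [if_neg hpj, if_pos hqi]
              have := hdom k0 p.2 hk0 hpj; linarith
            · rcases hcase with h | h
              · exact absurd h hqi
              · exact absurd h hpj
          calc B1 p.1 p.2 + B2 q.1 q.2 ≤ A i1 j1 := hval
            _ = ∑ r ∈ ({(i1, j1)} : Finset (I × J)), A r.1 r.2 := by
                rw [Finset.sum_singleton]
            _ ≤ assignGame A S := le_assignGame' A hA hmatch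
        · push_neg at hcase
          obtain ⟨hqi, hpj⟩ := hcase
          have hpq : p ≠ q := fun h => hqi (by rw [← h, hp1])
          have hmatch : IsMatching S ({p, q} : Finset (I × J)) := by
            refine ⟨?_, ?_, ?_⟩
            · intro r hr
              simp only [Finset.mem_insert, Finset.mem_singleton] at hr
              rcases hr with hr | hr
              · rw [hr]; exact hμ.1 p hpμ
              · rw [hr]; exact hν.1 q hqν
            · intro r hr s hs h
              simp only [Finset.mem_insert, Finset.mem_singleton] at hr hs
              rcases hr with hr | hr <;> rcases hs with hs | hs <;> rw [hr, hs]
              · have hpq1 : p.1 = q.1 := by rw [← hr, ← hs]; exact h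
                exact absurd (hpq1.symm.trans hp1) hqi
              · have hqp1 : q.1 = p.1 := by rw [← hr, ← hs]; exact h
                exact absurd (hqp1.trans hp1) hqi
            · intro r hr s hs h
              simp only [Finset.mem_insert, Finset.mem_singleton] at hr hs
              rcases hr with hr | hr <;> rcases hs with hs | hs <;> rw [hr, hs]
              · have hpq2 : p.2 = q.2 := by rw [← hr, ← hs]; exact h
                exact absurd (hpq2.trans hq2) hpj
              · have hqp2 : q.2 = p.2 := by rw [← hr, ← hs]; exact h
                exact absurd (hqp2.symm.trans hq2) hpj
          have hval : B1 p.1 p.2 + B2 q.1 q.2 = A p.1 p.2 + A q.1 q.2 := by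
            rw [hB1def, hB2def]; dsimp only
            rw [if_pos hp1, if_neg hpj, if_pos hq2, if_neg hqi, hp1, hq2]
          calc B1 p.1 p.2 + B2 q.1 q.2 = A p.1 p.2 + A q.1 q.2 := hval
            _ = ∑ r ∈ ({p, q} : Finset (I × J)), A r.1 r.2 := by rw [Finset.sum_pair hpq]
            _ ≤ assignGame A S := le_assignGame' A hA hmatch
  apply le_antisymm
  · apply assignGame_le'
    intro μ hμ
    have hsplit : ∑ p ∈ μ, A p.1 p.2 = (∑ p ∈ μ, B1 p.1 p.2) + (∑ p ∈ μ, B2 p.1 p.2) := by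
      rw [← Finset.sum_add_distrib]
      exact Finset.sum_congr rfl fun p _ => hsum p.1 p.2
    rw [hsplit]
    exact add_le_add (le_assignGame' B1 hB1nn hμ) (le_assignGame' B2 hB2nn hμ)
  · rw [← le_sub_iff_add_le]
    apply assignGame_le'
    intro μ hμ
    rw [le_sub_iff_add_le, add_comm, ← le_sub_iff_add_le]
    apply assignGame_le'
    intro ν hν
    rw [le_sub_iff_add_le, add_comm]
    exact key μ ν hμ hν
end

section
/- Let (I ∪ J, w_A) be an assignment game induced by a nonnegative matrix A = [a_{ij}]_{i∈I, j∈J}. If (I ∪ J, w_A) is PMAS-admissible, then there exist m ≥ 0, pairwise disjoint nonempty subsets I_1, …, I_m of I, and pairwise disjoint nonempty subsets J_1, …, J_m of J such that (a) every positive entry of A lies in some block I_r × J_r (i.e. a_{ij} > 0 implies i ∈ I_r and j ∈ J_r for some common r), and (b) for each r, the submatrix [a_{ij}]_{i∈I_r, j∈J_r} satisfies one of: (i) |I_r| = 1 and all its entries are positive; (ii) |J_r| = 1 and all its entries are positive; (iii) |I_r|, |J_r| ≥ 2 and it has Γ-shaped support with dominant corner. -/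
open Finset

/-- The submatrix of `A` on rows `Ir` and columns `Jr` is of one of the three
special types: (i) a single all-positive row, (ii) a single all-positive
column, (iii) Γ-shaped support with dominant corner. -/
def BlockOK {I J : Type*} (A : I → J → ℝ) (Ir : Finset I) (Jr : Finset J) : Prop :=
  (Ir.card = 1 ∧ ∀ i ∈ Ir, ∀ j ∈ Jr, 0 < A i j) ∨
  (Jr.card = 1 ∧ ∀ i ∈ Ir, ∀ j ∈ Jr, 0 < A i j) ∨
  (2 ≤ Ir.card ∧ 2 ≤ Jr.card ∧ ∃ i1 ∈ Ir, ∃ j1 ∈ Jr,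
    (∀ k ∈ Ir, ∀ l ∈ Jr, (k = i1 ∨ l = j1) → 0 < A k l) ∧
    (∀ k ∈ Ir, ∀ l ∈ Jr, k ≠ i1 → l ≠ j1 → A k l = 0) ∧
    (∀ k ∈ Ir, ∀ l ∈ Jr, k ≠ i1 → l ≠ j1 → A i1 l + A k j1 ≤ A i1 j1))

open scoped Classical

section Aux
set_option linter.unusedSectionVars false

variable {I J : Type*} [Fintype I] [Fintype J] (A : I → J → ℝ)

lemma aux_matching_empty (S : Finset (I ⊕ J)) : IsMatching S (∅ : Finset (I × J)) := by
  refine ⟨by simp, by simp, by simp⟩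

lemma aux_assignGame_le (S : Finset (I ⊕ J)) {c : ℝ}
    (h : ∀ μ : Finset (I × J), IsMatching S μ → ∑ p ∈ μ, A p.1 p.2 ≤ c) :
    assignGame A S ≤ c := by
  refine csSup_le ⟨0, ⟨∅, aux_matching_empty S, by simp⟩⟩ ?_
  rintro x ⟨μ, hμ, rfl⟩
  exact h μ hμ

lemma aux_le_assignGame (S : Finset (I ⊕ J)) (μ : Finset (I × J)) (hμ : IsMatching S μ) :
    ∑ p ∈ μ, A p.1 p.2 ≤ assignGame A S :=
  le_csSup ((Set.toFinite _).image _ |>.bddAbove) ⟨μ, hμ, rfl⟩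

lemma aux_single_left (i : I) : assignGame A {Sum.inl i} = 0 := by
  refine le_antisymm (aux_assignGame_le A _ ?_) ?_
  · intro μ hμ
    have hμe : μ = ∅ := Finset.eq_empty_of_forall_notMem fun p hp => by
      simpa using (hμ.1 p hp).2
    simp [hμe]
  · simpa using aux_le_assignGame A _ ∅ (aux_matching_empty _)

lemma aux_single_right (j : J) : assignGame A {Sum.inr j} = 0 := by
  refine le_antisymm (aux_assignGame_le A _ ?_) ?_
  · intro μ hμ
    have hμe : μ = ∅ := Finset.eq_empty_of_forall_notMem fun p hp => by
      simpa using (hμ.1 p hp).1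
    simp [hμe]
  · simpa using aux_le_assignGame A _ ∅ (aux_matching_empty _)

lemma aux_pair (hA : ∀ i j, 0 ≤ A i j) (i : I) (j : J) :
    assignGame A {Sum.inl i, Sum.inr j} = A i j := by
  refine le_antisymm (aux_assignGame_le A _ ?_) ?_
  · intro μ hμ
    have hsub : μ ⊆ {(i, j)} := by
      intro p hp
      obtain ⟨h1, h2⟩ := hμ.1 p hp
      have e1 : p.1 = i := by simpa using h1
      have e2 : p.2 = j := by simpa using h2
      simp [Finset.mem_singleton, Prod.ext_iff, e1, e2]
    calc ∑ p ∈ μ, A p.1 p.2 ≤ ∑ p ∈ ({(i,j)} : Finset (I × J)), A p.1 p.2 :=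
          Finset.sum_le_sum_of_subset_of_nonneg hsub (fun p _ _ => hA p.1 p.2)
      _ = A i j := by simp
  · have hm : IsMatching ({Sum.inl i, Sum.inr j} : Finset (I ⊕ J)) {(i, j)} := by
      refine ⟨by simp, by simp, by simp⟩
    simpa using aux_le_assignGame A _ {(i, j)} hm

lemma aux_triple_cols_le (hA : ∀ i j, 0 ≤ A i j) (i : I) {j l : J} (hjl : j ≠ l) :
    assignGame A {Sum.inl i, Sum.inr j, Sum.inr l} ≤ max (A i j) (A i l) := by
  refine aux_assignGame_le A _ ?_
  intro μ hμ
  by_cases hm : (i, j) ∈ μ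
  · have hsub : μ ⊆ {(i, j)} := by
      intro p hp
      have e1 : p.1 = i := by simpa using (hμ.1 p hp).1
      have := hμ.2.1 p hp (i, j) hm e1
      simp [this]
    calc ∑ p ∈ μ, A p.1 p.2 ≤ ∑ p ∈ ({(i,j)} : Finset (I × J)), A p.1 p.2 :=
          Finset.sum_le_sum_of_subset_of_nonneg hsub (fun p _ _ => hA p.1 p.2)
      _ = A i j := by simp
      _ ≤ _ := le_max_left _ _
  · have hsub : μ ⊆ {(i, l)} := by
      intro p hp
      have e1 : p.1 = i := by simpa using (hμ.1 p hp).1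
      have e2 : p.2 = j ∨ p.2 = l := by simpa using (hμ.1 p hp).2
      rcases e2 with e2 | e2
      · exact absurd (by rw [← e1, ← e2] at hm ⊢; simpa using hp) hm
      · simp [Finset.mem_singleton, Prod.ext_iff, e1, e2]
    calc ∑ p ∈ μ, A p.1 p.2 ≤ ∑ p ∈ ({(i,l)} : Finset (I × J)), A p.1 p.2 :=
          Finset.sum_le_sum_of_subset_of_nonneg hsub (fun p _ _ => hA p.1 p.2)
      _ = A i l := by simp
      _ ≤ _ := le_max_right _ _

lemma aux_triple_rows_le (hA : ∀ i j, 0 ≤ A i j) {i k : I} (hik : i ≠ k) (j : J) :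
    assignGame A {Sum.inl i, Sum.inl k, Sum.inr j} ≤ max (A i j) (A k j) := by
  refine aux_assignGame_le A _ ?_
  intro μ hμ
  by_cases hm : (i, j) ∈ μ
  · have hsub : μ ⊆ {(i, j)} := by
      intro p hp
      have e2 : p.2 = j := by simpa using (hμ.1 p hp).2
      have := hμ.2.2 p hp (i, j) hm e2
      simp [this]
    calc ∑ p ∈ μ, A p.1 p.2 ≤ ∑ p ∈ ({(i,j)} : Finset (I × J)), A p.1 p.2 :=
          Finset.sum_le_sum_of_subset_of_nonneg hsub (fun p _ _ => hA p.1 p.2)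
      _ = A i j := by simp
      _ ≤ _ := le_max_left _ _
  · have hsub : μ ⊆ {(k, j)} := by
      intro p hp
      have e2 : p.2 = j := by simpa using (hμ.1 p hp).2
      have e1 : p.1 = i ∨ p.1 = k := by simpa using (hμ.1 p hp).1
      rcases e1 with e1 | e1
      · exact absurd (by rw [← e1, ← e2] at hm ⊢; simpa using hp) hm
      · simp [Finset.mem_singleton, Prod.ext_iff, e1, e2]
    calc ∑ p ∈ μ, A p.1 p.2 ≤ ∑ p ∈ ({(k,j)} : Finset (I × J)), A p.1 p.2 :=
          Finset.sum_le_sum_of_subset_of_nonneg hsub (fun p _ _ => hA p.1 p.2)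
      _ = A k j := by simp
      _ ≤ _ := le_max_right _ _

end Aux

section Key
set_option linter.unusedSectionVars false
open scoped Classical

variable {I J : Type*} [Fintype I] [Fintype J] {A : I → J → ℝ}

lemma aux_nonneg (hA : ∀ i j, 0 ≤ A i j) {y : Finset (I ⊕ J) → (I ⊕ J) → ℝ}
    (hy : IsPMAS (assignGame A) y) (S : Finset (I ⊕ J)) (p : I ⊕ J) (hp : p ∈ S) :
    0 ≤ y S p := by
  obtain ⟨eff, mono⟩ := hy
  have e := eff {p} (Finset.singleton_nonempty p)
  rw [Finset.sum_singleton] at e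
  have hz : assignGame A ({p} : Finset (I ⊕ J)) = 0 := by
    cases p with
    | inl i => exact aux_single_left A i
    | inr j => exact aux_single_right A j
  have hm := mono {p} S (Finset.singleton_subset_iff.2 hp) p (Finset.mem_singleton_self p)
  rw [e, hz] at hm
  exact hm

lemma pmas_key (hA : ∀ i j, 0 ≤ A i j) {y : Finset (I ⊕ J) → (I ⊕ J) → ℝ}
    (hy : IsPMAS (assignGame A) y) {i k : I} {j l : J} (hik : i ≠ k) (hjl : j ≠ l)
    (ha : 0 < A i j) (hb : 0 < A i l) (hc : 0 < A k j) :
    A i l + A k j ≤ A i j := by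
  obtain ⟨eff, mono⟩ := hy
  have nn := aux_nonneg hA ⟨eff, mono⟩
  -- pair sums
  have pairsum : ∀ (i' : I) (j' : J),
      y {Sum.inl i', Sum.inr j'} (Sum.inl i') + y {Sum.inl i', Sum.inr j'} (Sum.inr j')
        = A i' j' := by
    intro i' j'
    have e := eff {Sum.inl i', Sum.inr j'} ⟨Sum.inl i', Finset.mem_insert_self _ _⟩
    rw [Finset.sum_pair (by simp)] at e
    rw [aux_pair A hA] at e
    exact e
  -- triple S = {inl i, inr j, inr l}
  set S : Finset (I ⊕ J) := {Sum.inl i, Sum.inr j, Sum.inr l} with hS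
  have effS := eff S ⟨Sum.inl i, by simp [hS]⟩
  have sumS : ∑ p ∈ S, y S p = y S (Sum.inl i) + (y S (Sum.inr j) + y S (Sum.inr l)) := by
    rw [hS, Finset.sum_insert (by simp), Finset.sum_insert (by simp [hjl]),
      Finset.sum_singleton]
  have hP2S : ({Sum.inl i, Sum.inr l} : Finset (I ⊕ J)) ⊆ S := by
    intro x hx; simp only [hS, Finset.mem_insert, Finset.mem_singleton] at hx ⊢; tauto
  have hP1S : ({Sum.inl i, Sum.inr j} : Finset (I ⊕ J)) ⊆ S := by
    intro x hx; simp only [hS, Finset.mem_insert, Finset.mem_singleton] at hx ⊢; tauto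
  have m1 := mono _ S hP2S (Sum.inl i) (Finset.mem_insert_self _ _)
  have m2 := mono _ S hP2S (Sum.inr l) (by simp)
  have m3 := mono _ S hP1S (Sum.inr j) (by simp)
  have hSle := aux_triple_cols_le A hA i hjl
  rw [← hS] at hSle
  have hbnd1 : A i l + y {Sum.inl i, Sum.inr j} (Sum.inr j) ≤ max (A i j) (A i l) := by
    have := pairsum i l
    have := sumS
    linarith [effS, m1, m2, m3]
  -- triple T = {inl i, inl k, inr j}
  set T : Finset (I ⊕ J) := {Sum.inl i, Sum.inl k, Sum.inr j} with hT
  have effT := eff T ⟨Sum.inl i, by simp [hT]⟩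
  have sumT : ∑ p ∈ T, y T p = y T (Sum.inl i) + (y T (Sum.inl k) + y T (Sum.inr j)) := by
    rw [hT, Finset.sum_insert (by simp [hik]), Finset.sum_insert (by simp),
      Finset.sum_singleton]
  have hP3T : ({Sum.inl k, Sum.inr j} : Finset (I ⊕ J)) ⊆ T := by
    intro x hx; simp only [hT, Finset.mem_insert, Finset.mem_singleton] at hx ⊢; tauto
  have hP1T : ({Sum.inl i, Sum.inr j} : Finset (I ⊕ J)) ⊆ T := by
    intro x hx; simp only [hT, Finset.mem_insert, Finset.mem_singleton] at hx ⊢; tauto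
  have m4 := mono _ T hP3T (Sum.inl k) (Finset.mem_insert_self _ _)
  have m5 := mono _ T hP3T (Sum.inr j) (by simp)
  have m6 := mono _ T hP1T (Sum.inl i) (by simp)
  have hTle := aux_triple_rows_le A hA hik j
  rw [← hT] at hTle
  have hbnd2 : A k j + y {Sum.inl i, Sum.inr j} (Sum.inl i) ≤ max (A i j) (A k j) := by
    have := pairsum k j
    linarith [effT, sumT, m4, m5, m6]
  have hps := pairsum i j
  have nα := nn {Sum.inl i, Sum.inr j} (Sum.inl i) (Finset.mem_insert_self _ _)
  have nβ := nn {Sum.inl i, Sum.inr j} (Sum.inr j) (by simp)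
  rcases max_cases (A i j) (A i l) with ⟨e1, _⟩ | ⟨e1, _⟩ <;>
    rcases max_cases (A i j) (A k j) with ⟨e2, _⟩ | ⟨e2, _⟩ <;>
    rw [e1] at hbnd1 <;> rw [e2] at hbnd2 <;> linarith

lemma no_path_rows (hA : ∀ i j, 0 ≤ A i j) {y : Finset (I ⊕ J) → (I ⊕ J) → ℝ}
    (hy : IsPMAS (assignGame A) y) {i i' i'' : I} {j j' : J}
    (h1 : i' ≠ i) (h2 : i' ≠ i'') (hj : j ≠ j')
    (p1 : 0 < A i j) (p2 : 0 < A i' j) (p3 : 0 < A i' j') (p4 : 0 < A i'' j') : False := by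
  have k1 := pmas_key hA hy h1 hj p2 p3 p1
  have k2 := pmas_key hA hy h2 hj.symm p3 p2 p4
  linarith

lemma no_path_cols (hA : ∀ i j, 0 ≤ A i j) {y : Finset (I ⊕ J) → (I ⊕ J) → ℝ}
    (hy : IsPMAS (assignGame A) y) {j j' j'' : J} {i i' : I}
    (h1 : j' ≠ j) (h2 : j' ≠ j'') (hi : i ≠ i')
    (p1 : 0 < A i j) (p2 : 0 < A i j') (p3 : 0 < A i' j') (p4 : 0 < A i' j'') : False := by
  have k1 := pmas_key hA hy hi h1 p2 p1 p3
  have k2 := pmas_key hA hy hi.symm h2 p3 p4 p2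
  linarith

end Key

/-- If an assignment game is PMAS-admissible, then the positive
entries of its matrix split into pairwise disjoint blocks, each being a single
all-positive row, a single all-positive column, or having Γ-shaped support
with dominant corner. -/
theorem assignGame_pmas_implies_block_structure {I J : Type*} [Fintype I] [Fintype J]
    (A : I → J → ℝ) (hA : ∀ i j, 0 ≤ A i j)
    (hadm : ∃ y, IsPMAS (assignGame A) y) :
    ∃ (m : ℕ) (Iblk : Fin m → Finset I) (Jblk : Fin m → Finset J),
      (∀ r, (Iblk r).Nonempty) ∧ (∀ r, (Jblk r).Nonempty) ∧
      (∀ r s, r ≠ s → Disjoint (Iblk r) (Iblk s)) ∧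
      (∀ r s, r ≠ s → Disjoint (Jblk r) (Jblk s)) ∧
      (∀ i j, 0 < A i j → ∃ r, i ∈ Iblk r ∧ j ∈ Jblk r) ∧
      (∀ r, BlockOK A (Iblk r) (Jblk r)) := by
  classical
  obtain ⟨y, hy⟩ := hadm
  set relr : I → I → Prop := fun a b => ∃ c, 0 < A a c ∧ 0 < A b c with hrelr
  set relc : J → J → Prop := fun a b => ∃ r, 0 < A r a ∧ 0 < A r b with hrelc
  have relr_symm : ∀ a b, relr a b → relr b a := by
    rintro a b ⟨c, h1, h2⟩; exact ⟨c, h2, h1⟩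
  have relc_symm : ∀ a b, relc a b → relc b a := by
    rintro a b ⟨r, h1, h2⟩; exact ⟨r, h2, h1⟩
  have relr_trans : ∀ a b d, relr a b → relr b d → relr a d := by
    rintro a b d ⟨c, hac, hbc⟩ ⟨c', hbc', hdc'⟩
    by_cases hcc : c = c'
    · exact ⟨c, hac, hcc ▸ hdc'⟩
    · by_cases hab : a = b
      · exact ⟨c', hab ▸ hbc', hdc'⟩
      · by_cases hbd : b = d
        · exact ⟨c, hac, hbd ▸ hbc⟩
        · exact (no_path_rows hA hy (Ne.symm hab) hbd hcc hac hbc hbc' hdc').elim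
  have relc_trans : ∀ a b d, relc a b → relc b d → relc a d := by
    rintro a b d ⟨r, har, hbr⟩ ⟨r', hbr', hdr'⟩
    by_cases hrr : r = r'
    · exact ⟨r, har, hrr ▸ hdr'⟩
    · by_cases hab : a = b
      · exact ⟨r', hab ▸ hbr', hdr'⟩
      · by_cases hbd : b = d
        · exact ⟨r, har, hbd ▸ hbr⟩
        · exact (no_path_cols hA hy (Ne.symm hab) hbd hrr har hbr hbr' hdr').elim
  set Ir : I → Finset I := fun i => univ.filter (fun k => relr k i) with hIr
  set Jc : J → Finset J := fun j => univ.filter (fun l => relc l j) with hJc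
  have memIr : ∀ (i k : I), k ∈ Ir i ↔ relr k i := by
    intro i k; simp [hIr]
  have memJc : ∀ (j l : J), l ∈ Jc j ↔ relc l j := by
    intro j l; simp [hJc]
  have clsR_eq : ∀ a b, relr a b → Ir a = Ir b := by
    intro a b hab
    ext k
    rw [memIr, memIr]
    exact ⟨fun h => relr_trans k a b h hab, fun h => relr_trans k b a h (relr_symm a b hab)⟩
  have clsC_eq : ∀ a b, relc a b → Jc a = Jc b := by
    intro a b hab
    ext l
    rw [memJc, memJc]
    exact ⟨fun h => relc_trans l a b h hab, fun h => relc_trans l b a h (relc_symm a b hab)⟩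
  set E : Finset (I × J) := univ.filter (fun p => 0 < A p.1 p.2) with hE
  set B : Finset (Finset I × Finset J) := E.image (fun p => (Ir p.1, Jc p.2)) with hB
  have hmemB : ∀ x : ↥B, ∃ p : I × J, 0 < A p.1 p.2 ∧ x.1 = (Ir p.1, Jc p.2) := by
    rintro ⟨v, hv⟩
    rw [hB, Finset.mem_image] at hv
    obtain ⟨p, hpE, hpv⟩ := hv
    exact ⟨p, by simpa [hE] using hpE, hpv.symm⟩
  set e := B.equivFin with he
  refine ⟨B.card, fun r => (e.symm r).1.1, fun r => (e.symm r).1.2, ?_, ?_, ?_, ?_, ?_, ?_⟩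
  · intro r
    dsimp only
    obtain ⟨p, hp, hval⟩ := hmemB (e.symm r)
    refine ⟨p.1, ?_⟩
    rw [hval]
    exact (memIr _ _).2 ⟨p.2, hp, hp⟩
  · intro r
    dsimp only
    obtain ⟨p, hp, hval⟩ := hmemB (e.symm r)
    refine ⟨p.2, ?_⟩
    rw [hval]
    exact (memJc _ _).2 ⟨p.1, hp, hp⟩
  · intro r s hrs
    dsimp only
    obtain ⟨p, hp, hvr⟩ := hmemB (e.symm r)
    obtain ⟨q, hq, hvs⟩ := hmemB (e.symm s)
    rw [Finset.disjoint_left]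
    intro k hkr hks
    rw [hvr] at hkr
    rw [hvs] at hks
    have hpq : relr p.1 q.1 :=
      relr_trans _ _ _ (relr_symm _ _ ((memIr _ _).1 hkr)) ((memIr _ _).1 hks)
    obtain ⟨c, hc1, hc2⟩ := id hpq
    have hcols : relc p.2 q.2 :=
      relc_trans _ c _ ⟨p.1, hp, hc1⟩ ⟨q.1, hc2, hq⟩
    have : (e.symm r).1 = (e.symm s).1 := by
      rw [hvr, hvs, clsR_eq _ _ hpq, clsC_eq _ _ hcols]
    exact hrs (e.symm.injective (Subtype.ext this))
  · intro r s hrs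
    dsimp only
    obtain ⟨p, hp, hvr⟩ := hmemB (e.symm r)
    obtain ⟨q, hq, hvs⟩ := hmemB (e.symm s)
    rw [Finset.disjoint_left]
    intro l hlr hls
    rw [hvr] at hlr
    rw [hvs] at hls
    have hpq : relc p.2 q.2 :=
      relc_trans _ _ _ (relc_symm _ _ ((memJc _ _).1 hlr)) ((memJc _ _).1 hls)
    obtain ⟨c, hc1, hc2⟩ := id hpq
    have hrows : relr p.1 q.1 :=
      relr_trans _ c _ ⟨p.2, hp, hc1⟩ ⟨q.2, hc2, hq⟩
    have : (e.symm r).1 = (e.symm s).1 := by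
      rw [hvr, hvs, clsR_eq _ _ hrows, clsC_eq _ _ hpq]
    exact hrs (e.symm.injective (Subtype.ext this))
  · intro i j hij
    have hmem : (Ir i, Jc j) ∈ B := by
      rw [hB, Finset.mem_image]
      exact ⟨(i, j), by simp [hE, hij], rfl⟩
    refine ⟨e ⟨(Ir i, Jc j), hmem⟩, ?_, ?_⟩
    · dsimp only
      rw [Equiv.symm_apply_apply]
      exact (memIr _ _).2 ⟨j, hij, hij⟩
    · dsimp only
      rw [Equiv.symm_apply_apply]
      exact (memJc _ _).2 ⟨i, hij, hij⟩
  · intro r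
    dsimp only
    obtain ⟨p, hp, hval⟩ := hmemB (e.symm r)
    have h1 : (e.symm r).1.1 = Ir p.1 := by rw [hval]
    have h2 : (e.symm r).1.2 = Jc p.2 := by rw [hval]
    rw [h1, h2]
    set i0 := p.1
    set j0 := p.2
    have hi0 : i0 ∈ Ir i0 := (memIr _ _).2 ⟨j0, hp, hp⟩
    have hj0 : j0 ∈ Jc j0 := (memJc _ _).2 ⟨i0, hp, hp⟩
    -- row membership implies positive entry in some shared column etc.
    by_cases hc1 : (Ir i0).card = 1
    · left
      refine ⟨hc1, ?_⟩
      intro i hi j hj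
      obtain ⟨x0, hx0⟩ := Finset.card_eq_one.1 hc1
      have hix : i = x0 := by rwa [hx0, Finset.mem_singleton] at hi
      have hi0x : i0 = x0 := by rwa [hx0, Finset.mem_singleton] at hi0
      obtain ⟨r', hr'j, hr'j0⟩ := (memJc _ _).1 hj
      have hr'mem : r' ∈ Ir i0 := (memIr _ _).2 ⟨j0, hr'j0, hp⟩
      have hr'x : r' = x0 := by rwa [hx0, Finset.mem_singleton] at hr'mem
      rw [hix, ← hr'x]
      exact hr'j
    · by_cases hc2 : (Jc j0).card = 1
      · right; left
        refine ⟨hc2, ?_⟩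
        intro i hi j hj
        obtain ⟨x0, hx0⟩ := Finset.card_eq_one.1 hc2
        have hjx : j = x0 := by rwa [hx0, Finset.mem_singleton] at hj
        have hj0x : j0 = x0 := by rwa [hx0, Finset.mem_singleton] at hj0
        obtain ⟨c', hic', hi0c'⟩ := (memIr _ _).1 hi
        have hc'mem : c' ∈ Jc j0 := (memJc _ _).2 ⟨i0, hi0c', hp⟩
        have hc'x : c' = x0 := by rwa [hx0, Finset.mem_singleton] at hc'mem
        rw [hjx, ← hc'x]
        exact hic'
      · right; right
        have hcard1 : 2 ≤ (Ir i0).card := by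
          have := Finset.card_pos.2 ⟨i0, hi0⟩
          omega
        have hcard2 : 2 ≤ (Jc j0).card := by
          have := Finset.card_pos.2 ⟨j0, hj0⟩
          omega
        obtain ⟨k0, hk0mem, hk0ne⟩ := Finset.exists_mem_ne (show 1 < (Ir i0).card by omega) i0
        obtain ⟨j1, hk0j1, hi0j1⟩ := (memIr _ _).1 hk0mem
        obtain ⟨l0, hl0mem, hl0ne⟩ := Finset.exists_mem_ne (show 1 < (Jc j0).card by omega) j0
        obtain ⟨i1, hi1l0, hi1j0⟩ := (memJc _ _).1 hl0mem
        have G1 : ∀ k ∈ Ir i0, 0 < A k j1 := by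
          intro k hk
          obtain ⟨c, hkc, hi0c⟩ := (memIr _ _).1 hk
          by_cases hki0 : k = i0
          · rw [hki0]; exact hi0j1
          · by_cases hcj1 : c = j1
            · rw [← hcj1]; exact hkc
            · exact (no_path_rows hA hy (fun h => hki0 h.symm) (Ne.symm hk0ne) hcj1
                hkc hi0c hi0j1 hk0j1).elim
        have G2 : ∀ l ∈ Jc j0, 0 < A i1 l := by
          intro l hl
          obtain ⟨r', hlr', hj0r'⟩ := (memJc _ _).1 hl
          by_cases hlj0 : l = j0
          · rw [hlj0]; exact hi1j0
          · by_cases hri1 : r' = i1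
            · rw [← hri1]; exact hlr'
            · exact (no_path_cols hA hy (fun h => hlj0 h.symm) (Ne.symm hl0ne) hri1
                hlr' hj0r' hi1j0 hi1l0).elim
        have hi1mem : i1 ∈ Ir i0 := (memIr _ _).2 ⟨j0, hi1j0, hp⟩
        have hj1mem : j1 ∈ Jc j0 := (memJc _ _).2 ⟨i0, hi0j1, hp⟩
        have hG0 : 0 < A i1 j1 := G1 i1 hi1mem
        refine ⟨hcard1, hcard2, i1, hi1mem, j1, hj1mem, ?_, ?_, ?_⟩
        · intro k hk l hl hor
          rcases hor with rfl | rfl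
          · exact G2 l hl
          · exact G1 k hk
        · intro k hk l hl hki1 hlj1
          by_contra hne
          have hpos : 0 < A k l := lt_of_le_of_ne (hA k l) (Ne.symm hne)
          exact no_path_rows hA hy (Ne.symm hki1) (Ne.symm hki1) hlj1
            hpos (G2 l hl) hG0 (G1 k hk)
        · intro k hk l hl hki1 hlj1
          exact pmas_key hA hy (Ne.symm hki1) (Ne.symm hlj1) hG0 (G2 l hl) (G1 k hk)
end
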